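/- arXiv:1701.04259 — 3 statements merged into one kernel-verified Lean document; each statement's English description precedes it below -/
import Mathlib

section
/- Let U ⊆ ℂⁿ be open, r : U → ℝ of class C², K ⊂ U compact, and C₁ > 0 a constant such that L_r(z;X) ≥ C₁‖X‖² for all z in some open neighborhood of K contained in U and all X ∈ ℂⁿ. Then there exist a constant C₂ with 0 < C₂ < C₁ and ε₂ > 0 such that for every ζ ∈ K and every z ∈ U with ‖z−ζ‖ < ε₂ one has r(z) ≥ r(ζ) − 2 Re P(z;ζ) + C₂‖z−ζ‖², where P(·;ζ) is the Levi polynomial of r at ζ. -/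
open Complex Metric Set

noncomputable section

/-- The `j`-th standard basis vector of `ℂⁿ`. -/
def stdBasis (n : ℕ) (j : Fin n) : EuclideanSpace ℂ (Fin n) :=
  EuclideanSpace.single j 1

/-- Wirtinger derivative `∂r/∂z_j = (1/2)(∂r/∂x_j − i ∂r/∂y_j)` of `r : ℂⁿ → ℝ` at `z`. -/
def wirtingerZ {n : ℕ} (r : EuclideanSpace ℂ (Fin n) → ℝ)
    (z : EuclideanSpace ℂ (Fin n)) (j : Fin n) : ℂ :=
  (1 / 2 : ℂ) * (((fderiv ℝ r z (stdBasis n j) : ℝ) : ℂ)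
    - Complex.I * ((fderiv ℝ r z (Complex.I • stdBasis n j) : ℝ) : ℂ))

/-- Wirtinger derivative `∂r/∂z̄_j = (1/2)(∂r/∂x_j + i ∂r/∂y_j)` of `r : ℂⁿ → ℝ` at `z`. -/
def wirtingerZbar {n : ℕ} (r : EuclideanSpace ℂ (Fin n) → ℝ)
    (z : EuclideanSpace ℂ (Fin n)) (j : Fin n) : ℂ :=
  (1 / 2 : ℂ) * (((fderiv ℝ r z (stdBasis n j) : ℝ) : ℂ)
    + Complex.I * ((fderiv ℝ r z (Complex.I • stdBasis n j) : ℝ) : ℂ))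

/-- Second Wirtinger derivative `∂²r/∂z_i∂z_j` of `r : ℂⁿ → ℝ` at `z`. -/
def wirtingerZZ {n : ℕ} (r : EuclideanSpace ℂ (Fin n) → ℝ)
    (z : EuclideanSpace ℂ (Fin n)) (i j : Fin n) : ℂ :=
  (1 / 4 : ℂ) *
    (((fderiv ℝ (fderiv ℝ r) z (stdBasis n i) (stdBasis n j) : ℝ) : ℂ)
      - ((fderiv ℝ (fderiv ℝ r) z (Complex.I • stdBasis n i) (Complex.I • stdBasis n j) : ℝ) : ℂ)
      - Complex.I * (((fderiv ℝ (fderiv ℝ r) z (stdBasis n i) (Complex.I • stdBasis n j) : ℝ) : ℂ)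
        + ((fderiv ℝ (fderiv ℝ r) z (Complex.I • stdBasis n i) (stdBasis n j) : ℝ) : ℂ)))

/-- Second Wirtinger derivative `∂²r/∂z_i∂z̄_j` of `r : ℂⁿ → ℝ` at `z`. -/
def wirtingerZZbar {n : ℕ} (r : EuclideanSpace ℂ (Fin n) → ℝ)
    (z : EuclideanSpace ℂ (Fin n)) (i j : Fin n) : ℂ :=
  (1 / 4 : ℂ) *
    (((fderiv ℝ (fderiv ℝ r) z (stdBasis n i) (stdBasis n j) : ℝ) : ℂ)
      + ((fderiv ℝ (fderiv ℝ r) z (Complex.I • stdBasis n i) (Complex.I • stdBasis n j) : ℝ) : ℂ)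
      + Complex.I * (((fderiv ℝ (fderiv ℝ r) z (stdBasis n i) (Complex.I • stdBasis n j) : ℝ) : ℂ)
        - ((fderiv ℝ (fderiv ℝ r) z (Complex.I • stdBasis n i) (stdBasis n j) : ℝ) : ℂ)))

/-- The Levi form `L_r(z;X) = Σ_{i,j} (∂²r/∂z_i∂z̄_j)(z) X_i conj(X_j)`
(a real number, for real-valued `C²` functions `r`). -/
def leviForm {n : ℕ} (r : EuclideanSpace ℂ (Fin n) → ℝ)
    (z X : EuclideanSpace ℂ (Fin n)) : ℝ :=
  (∑ i : Fin n, ∑ j : Fin n,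
    wirtingerZZbar r z i j * X i * (starRingEnd ℂ) (X j)).re

/-- The Levi polynomial
`P(z;ζ) = −Σ_j (∂r/∂z_j)(ζ)(z_j−ζ_j) − (1/2) Σ_{i,j} (∂²r/∂z_i∂z_j)(ζ)(z_i−ζ_i)(z_j−ζ_j)`
of `r` at `ζ`, evaluated at `z` (first argument `ζ`, second `z`). -/
def leviPolynomial {n : ℕ} (r : EuclideanSpace ℂ (Fin n) → ℝ)
    (ζ z : EuclideanSpace ℂ (Fin n)) : ℂ :=
  - (∑ j : Fin n, wirtingerZ r ζ j * (z j - ζ j))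
    - (1 / 2 : ℂ) * ∑ i : Fin n, ∑ j : Fin n,
        wirtingerZZ r ζ i j * (z i - ζ i) * (z j - ζ j)

/-- The complex gradient `∇r(z) = (∂r/∂z̄_1(z), …, ∂r/∂z̄_n(z))`. -/
def wirtingerGrad {n : ℕ} (r : EuclideanSpace ℂ (Fin n) → ℝ)
    (z : EuclideanSpace ℂ (Fin n)) : EuclideanSpace ℂ (Fin n) :=
  (WithLp.equiv 2 (Fin n → ℂ)).symm fun j => wirtingerZbar r z j

/-- `‖f‖_{C²(U)} < ε`: the function and its first- and second-order derivatives
are bounded by `ε` on `U`. -/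
def C2NormLtOn {n : ℕ} (f : EuclideanSpace ℂ (Fin n) → ℝ)
    (U : Set (EuclideanSpace ℂ (Fin n))) (ε : ℝ) : Prop :=
  ∀ z ∈ U, |f z| < ε ∧ ‖fderiv ℝ f z‖ < ε ∧ ‖fderiv ℝ (fderiv ℝ f) z‖ < ε

/-! With `h = z - ζ`, the real second-order Taylor expansion of `r` at `ζ` gives
`r(ζ + h) ≥ r(ζ) + Dr(ζ)h + ½D²r(ζ)(h,h) - ½M‖h‖²`, where `M` bounds the oscillation of `D²r`
on the segment `[ζ, ζ + h]`; since `D²r` is uniformly continuous near the compact set `K`, we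
may take `M = C₁` once `‖h‖` is small. In Wirtinger coordinates
`Dr(ζ)h + ½D²r(ζ)(h,h) = -2 Re P(ζ + h; ζ) + L_r(ζ; h)`, and `L_r(ζ; h) ≥ C₁‖h‖²` absorbs the
remainder, leaving `C₂ = C₁ / 2`. -/

theorem taylor_lower_bound_of_le_secondDeriv {g g' g'' : ℝ → ℝ} {a b c : ℝ} (hab : a ≤ b)
    (hg : ∀ t ∈ Icc a b, HasDerivAt g (g' t) t)
    (hg' : ∀ t ∈ Icc a b, HasDerivAt g' (g'' t) t)
    (hc : ∀ t ∈ Icc a b, c ≤ g'' t) :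
    g a + g' a * (b - a) + c * (b - a) ^ 2 / 2 ≤ g b := by
  have hg'_ge : ∀ t ∈ Icc a b, g' a + c * (t - a) ≤ g' t := by
    refine image_le_of_deriv_right_le_deriv_boundary (f' := fun _ => c) (by fun_prop)
      (fun t _ => ?_) (by simp) (fun t ht => (hg' t ht).continuousAt.continuousWithinAt)
      (fun t ht => (hg' t (Ico_subset_Icc_self ht)).hasDerivWithinAt)
      (fun t ht => hc t (Ico_subset_Icc_self ht))
    simpa using ((((hasDerivAt_id t).sub_const a).const_mul c).const_add (g' a)).hasDerivWithinAt
  refine image_le_of_deriv_right_le_deriv_boundary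
    (f := fun t => g a + g' a * (t - a) + c * (t - a) ^ 2 / 2) (f' := fun t => g' a + c * (t - a))
    (by fun_prop) (fun t _ => ?_) (by simp) (fun t ht => (hg t ht).continuousAt.continuousWithinAt)
    (fun t ht => (hg t (Ico_subset_Icc_self ht)).hasDerivWithinAt)
    (fun t ht => hg'_ge t (Ico_subset_Icc_self ht)) (right_mem_Icc.mpr hab)
  have hlin := (((hasDerivAt_id' t).sub_const a).const_mul (g' a)).const_add (g a)
  have hquad := ((((hasDerivAt_id' t).sub_const a).fun_pow 2).const_mul c).div_const 2
  have hf : HasDerivAt (fun t => g a + g' a * (t - a) + c * (t - a) ^ 2 / 2)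
      (g' a + c * (t - a)) t := by
    refine (hlin.fun_add hquad).congr_deriv ?_
    simp only [Nat.cast_ofNat, mul_one]
    ring
  exact hf.hasDerivWithinAt

theorem IsCompact.exists_pos_forall_dist_lt_of_continuousOn {X Y : Type*} [PseudoMetricSpace X]
    [PseudoMetricSpace Y] {K U : Set X} {F : X → Y} (hK : IsCompact K) (hU : IsOpen U)
    (hKU : K ⊆ U) (hF : ContinuousOn F U) {ε : ℝ} (hε : 0 < ε) :
    ∃ δ > 0, ∀ x ∈ K, ∀ y, dist y x < δ → y ∈ U ∧ dist (F y) (F x) < ε := by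
  obtain ⟨δ₁, hδ₁, hthick⟩ := hK.exists_thickening_subset_open hU hKU
  obtain ⟨δ₂, hδ₂, hunif⟩ := Metric.mem_uniformity_dist.mp <|
    hK.uniformContinuousAt_of_continuousAt F
      (fun x hx => hF.continuousAt (hU.mem_nhds (hKU hx))) (Metric.dist_mem_uniformity hε)
  refine ⟨min δ₁ δ₂, lt_min hδ₁ hδ₂, fun x hx y hxy => ⟨?_, ?_⟩⟩
  · exact hthick (mem_thickening_iff.mpr ⟨x, hx, hxy.trans_le (min_le_left _ _)⟩)
  · rw [dist_comm]
    exact hunif (by rw [dist_comm]; exact hxy.trans_le (min_le_right _ _)) hx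

theorem taylor_lower_bound_of_norm_fderiv_fderiv_sub_le {E : Type*} [NormedAddCommGroup E]
    [NormedSpace ℝ E] {f : E → ℝ} {U : Set E} (hU : IsOpen U) (hf : ContDiffOn ℝ 2 f U)
    {x h : E} {M : ℝ}
    (hseg : ∀ t ∈ Icc (0 : ℝ) 1, x + t • h ∈ U ∧
      ‖fderiv ℝ (fderiv ℝ f) (x + t • h) - fderiv ℝ (fderiv ℝ f) x‖ ≤ M) :
    f x + fderiv ℝ f x h + fderiv ℝ (fderiv ℝ f) x h h / 2 - M * ‖h‖ ^ 2 / 2 ≤ f (x + h) := by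
  have hDf : ContDiffOn ℝ 1 (fderiv ℝ f) U := hf.fderiv_of_isOpen hU (by norm_num)
  have hline : ∀ t : ℝ, HasDerivAt (fun s : ℝ => x + s • h) h t := fun t => by
    simpa using ((hasDerivAt_id t).smul_const h).const_add x
  have hg : ∀ t ∈ Icc (0 : ℝ) 1,
      HasDerivAt (fun s => f (x + s • h)) (fderiv ℝ f (x + t • h) h) t := fun t ht =>
    ((hf.contDiffAt (hU.mem_nhds (hseg t ht).1)).differentiableAt (by norm_num)).hasFDerivAt
      |>.comp_hasDerivAt t (hline t)
  have hg' : ∀ t ∈ Icc (0 : ℝ) 1, HasDerivAt (fun s => fderiv ℝ f (x + s • h) h)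
      (fderiv ℝ (fderiv ℝ f) (x + t • h) h h) t := by
    intro t ht
    have hD2 : HasFDerivAt (fderiv ℝ f) (fderiv ℝ (fderiv ℝ f) (x + t • h)) (x + t • h) :=
      ((hDf.contDiffAt (hU.mem_nhds (hseg t ht).1)).differentiableAt (by norm_num)).hasFDerivAt
    have hc : HasDerivAt (fun s : ℝ => fderiv ℝ f (x + s • h))
        (fderiv ℝ (fderiv ℝ f) (x + t • h) h) t := hD2.comp_hasDerivAt t (hline t)
    simpa using hc.clm_apply (hasDerivAt_const t h)
  have hg'' : ∀ t ∈ Icc (0 : ℝ) 1,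
      fderiv ℝ (fderiv ℝ f) x h h - M * ‖h‖ ^ 2 ≤ fderiv ℝ (fderiv ℝ f) (x + t • h) h h := by
    intro t ht
    have hM := (hseg t ht).2
    have hdiff := (fderiv ℝ (fderiv ℝ f) (x + t • h) - fderiv ℝ (fderiv ℝ f) x).le_opNorm₂ h h
    rw [sub_apply, sub_apply, Real.norm_eq_abs] at hdiff
    have := neg_abs_le (fderiv ℝ (fderiv ℝ f) (x + t • h) h h - fderiv ℝ (fderiv ℝ f) x h h)
    nlinarith [norm_nonneg h, mul_le_mul_of_nonneg_right hM (sq_nonneg ‖h‖)]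
  have := taylor_lower_bound_of_le_secondDeriv zero_le_one hg hg' hg''
  simp only [zero_smul, add_zero, one_smul, sub_zero, mul_one, one_pow] at this
  linarith

theorem eq_sum_re_smul_stdBasis_add_im_smul {n : ℕ} (h : EuclideanSpace ℂ (Fin n)) :
    h = ∑ j, ((h j).re • stdBasis n j + (h j).im • (I • stdBasis n j)) := by
  ext k
  simp [stdBasis, WithLp.ofLp_sum, Pi.single_apply, Finset.sum_add_distrib]

theorem apply_eq_sum_re_mul_stdBasis_add_im_mul {n : ℕ}
    (L : EuclideanSpace ℂ (Fin n) →L[ℝ] ℝ) (h : EuclideanSpace ℂ (Fin n)) :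
    L h = ∑ j, ((h j).re * L (stdBasis n j) + (h j).im * L (I • stdBasis n j)) := by
  conv_lhs => rw [eq_sum_re_smul_stdBasis_add_im_smul h]
  simp only [map_sum, map_add, map_smul, smul_eq_mul]

theorem two_mul_re_sum_wirtingerZ_mul {n : ℕ} (r : EuclideanSpace ℂ (Fin n) → ℝ)
    (ζ h : EuclideanSpace ℂ (Fin n)) :
    2 * (∑ j, wirtingerZ r ζ j * h j).re = fderiv ℝ r ζ h := by
  rw [apply_eq_sum_re_mul_stdBasis_add_im_mul, Complex.re_sum, Finset.mul_sum]
  refine Finset.sum_congr rfl fun j _ => ?_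
  simp only [wirtingerZ, Complex.mul_re, Complex.mul_im, Complex.sub_re, Complex.sub_im,
    Complex.ofReal_re, Complex.ofReal_im, Complex.I_re, Complex.I_im]
  norm_num
  ring

theorem fderiv_fderiv_apply_self_eq {n : ℕ} (r : EuclideanSpace ℂ (Fin n) → ℝ)
    (ζ h : EuclideanSpace ℂ (Fin n)) :
    fderiv ℝ (fderiv ℝ r) ζ h h =
      2 * ((∑ i, ∑ j, wirtingerZZ r ζ i j * h i * h j).re + leviForm r ζ h) := by
  set Q := fderiv ℝ (fderiv ℝ r) ζ
  have hQ : Q h h = ∑ i, ∑ j,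
      ((h i).re * ((h j).re * Q (stdBasis n i) (stdBasis n j)
        + (h j).im * Q (stdBasis n i) (I • stdBasis n j))
      + (h i).im * ((h j).re * Q (I • stdBasis n i) (stdBasis n j)
        + (h j).im * Q (I • stdBasis n i) (I • stdBasis n j))) := by
    rw [← Q.flip_apply h h, apply_eq_sum_re_mul_stdBasis_add_im_mul]
    refine Finset.sum_congr rfl fun i _ => ?_
    rw [Q.flip_apply, Q.flip_apply, apply_eq_sum_re_mul_stdBasis_add_im_mul (Q _) h,
      apply_eq_sum_re_mul_stdBasis_add_im_mul (Q _) h, Finset.mul_sum, Finset.mul_sum,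
      ← Finset.sum_add_distrib]
  rw [hQ, leviForm, Complex.re_sum, Complex.re_sum, ← Finset.sum_add_distrib, Finset.mul_sum]
  refine Finset.sum_congr rfl fun i _ => ?_
  rw [Complex.re_sum, Complex.re_sum, ← Finset.sum_add_distrib, Finset.mul_sum]
  refine Finset.sum_congr rfl fun j _ => ?_
  simp only [wirtingerZZ, wirtingerZZbar, Complex.mul_re, Complex.mul_im, Complex.add_re,
    Complex.add_im, Complex.sub_re, Complex.sub_im, Complex.ofReal_re, Complex.ofReal_im,
    Complex.I_re, Complex.I_im, Complex.conj_re, Complex.conj_im]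
  norm_num
  ring

theorem neg_two_mul_re_leviPolynomial {n : ℕ} (r : EuclideanSpace ℂ (Fin n) → ℝ)
    (ζ z : EuclideanSpace ℂ (Fin n)) :
    -2 * (leviPolynomial r ζ z).re = fderiv ℝ r ζ (z - ζ)
      + fderiv ℝ (fderiv ℝ r) ζ (z - ζ) (z - ζ) / 2 - leviForm r ζ (z - ζ) := by
  rw [← two_mul_re_sum_wirtingerZ_mul, fderiv_fderiv_apply_self_eq]
  simp only [leviPolynomial, PiLp.sub_apply, Complex.sub_re, Complex.neg_re, Complex.mul_re]
  norm_num
  ring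

/-- Let `U ⊆ ℂⁿ` be open, `r : U → ℝ` of class `C²`, `K ⊂ U` compact, and
`C₁ > 0` such that `L_r(z;X) ≥ C₁‖X‖²` for all `z` in some open neighborhood of `K`
contained in `U` and all `X ∈ ℂⁿ`. Then there exist `0 < C₂ < C₁` and `ε₂ > 0` such
that for every `ζ ∈ K` and every `z ∈ U` with `‖z−ζ‖ < ε₂` one has
`r(z) ≥ r(ζ) − 2 Re P(z;ζ) + C₂‖z−ζ‖²`. -/
theorem statement6 {n : ℕ} (U : Set (EuclideanSpace ℂ (Fin n))) (hU : IsOpen U)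
    (r : EuclideanSpace ℂ (Fin n) → ℝ) (hr : ContDiffOn ℝ 2 r U)
    (K : Set (EuclideanSpace ℂ (Fin n))) (hK : IsCompact K) (hKU : K ⊆ U)
    (C₁ : ℝ) (hC₁ : 0 < C₁)
    (hlevi : ∃ V : Set (EuclideanSpace ℂ (Fin n)), IsOpen V ∧ K ⊆ V ∧ V ⊆ U ∧
      ∀ z ∈ V, ∀ X : EuclideanSpace ℂ (Fin n), C₁ * ‖X‖ ^ 2 ≤ leviForm r z X) :
    ∃ C₂ ε₂ : ℝ, 0 < C₂ ∧ C₂ < C₁ ∧ 0 < ε₂ ∧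
      ∀ ζ ∈ K, ∀ z ∈ U, ‖z - ζ‖ < ε₂ →
        r ζ - 2 * (leviPolynomial r ζ z).re + C₂ * ‖z - ζ‖ ^ 2 ≤ r z := by
  obtain ⟨V, -, hKV, -, hLevi⟩ := hlevi
  have hD1 : ContDiffOn ℝ 1 (fderiv ℝ r) U := hr.fderiv_of_isOpen hU (by norm_num)
  have hD2 : ContinuousOn (fderiv ℝ (fderiv ℝ r)) U := hD1.continuousOn_fderiv_of_isOpen hU le_rfl
  obtain ⟨ε, hε, hnear⟩ :=
    hK.exists_pos_forall_dist_lt_of_continuousOn (F := fderiv ℝ (fderiv ℝ r)) hU hKU hD2 hC₁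
  refine ⟨C₁ / 2, ε, by positivity, by linarith, hε, fun ζ hζ z _ hzζ => ?_⟩
  have hseg : ∀ t ∈ Icc (0 : ℝ) 1, ζ + t • (z - ζ) ∈ U ∧
      ‖fderiv ℝ (fderiv ℝ r) (ζ + t • (z - ζ)) - fderiv ℝ (fderiv ℝ r) ζ‖ ≤ C₁ := by
    intro t ht
    have hdist : dist (ζ + t • (z - ζ)) ζ < ε := by
      rw [dist_self_add_left, norm_smul, Real.norm_of_nonneg ht.1]
      nlinarith [norm_nonneg (z - ζ), ht.2]
    obtain ⟨hmem, hclose⟩ := hnear ζ hζ _ hdist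
    exact ⟨hmem, (dist_eq_norm (fderiv ℝ (fderiv ℝ r) _) _ ▸ hclose).le⟩
  have htaylor := taylor_lower_bound_of_norm_fderiv_fderiv_sub_le hU hr hseg
  rw [add_sub_cancel] at htaylor
  have hP := neg_two_mul_re_leviPolynomial r ζ z
  have hL := hLevi ζ (hKV hζ) (z - ζ)
  linarith

end
end

section
/- Let ζ ∈ ℂⁿ, let 0 < C₂ < 1, let ε₂ > 0 and 0 < η₁ < ε₂. Let r be a real-valued function and P : ℂⁿ → ℂ a function such that r(z) ≥ −2 Re P(z) + C₂‖z−ζ‖² for all z with ‖z−ζ‖ < ε₂. Let χ̂ : ℝ → [0,1] be a function with χ̂(u) = 1 for u ≤ η₁/2 and χ̂(u) = 0 for u ≥ η₁, and define φ(z) := χ̂(‖z−ζ‖) P(z) + (1 − χ̂(‖z−ζ‖)) ‖z−ζ‖². Then for every z ∈ ℂⁿ with ‖z−ζ‖ ≥ η₁/2 such that either ‖z−ζ‖ ≥ η₁ or r(z) < C₂η₁²/8, one has 2 Re φ(z) ≥ C₂η₁²/8. -/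
/-- Let `ζ ∈ ℂⁿ`, `0 < C₂ < 1`, `ε₂ > 0`, `0 < η₁ < ε₂`. Let `r` be
real-valued and `P : ℂⁿ → ℂ` with `r(z) ≥ −2 Re P(z) + C₂‖z−ζ‖²` for `‖z−ζ‖ < ε₂`.
Let `χ̂ : ℝ → [0,1]` with `χ̂(u) = 1` for `u ≤ η₁/2` and `χ̂(u) = 0` for `u ≥ η₁`, and
`φ(z) := χ̂(‖z−ζ‖) P(z) + (1 − χ̂(‖z−ζ‖)) ‖z−ζ‖²`. Then for every `z` with
`‖z−ζ‖ ≥ η₁/2` such that either `‖z−ζ‖ ≥ η₁` or `r(z) < C₂η₁²/8`, one has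
`2 Re φ(z) ≥ C₂η₁²/8`. -/
theorem statement7 {n : ℕ} (ζ : EuclideanSpace ℂ (Fin n)) (C₂ ε₂ η₁ : ℝ)
    (hC₂0 : 0 < C₂) (hC₂1 : C₂ < 1) (hε₂ : 0 < ε₂) (hη₁0 : 0 < η₁) (hη₁ : η₁ < ε₂)
    (r : EuclideanSpace ℂ (Fin n) → ℝ) (P : EuclideanSpace ℂ (Fin n) → ℂ)
    (hr : ∀ z : EuclideanSpace ℂ (Fin n), ‖z - ζ‖ < ε₂ →
      -2 * (P z).re + C₂ * ‖z - ζ‖ ^ 2 ≤ r z)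
    (χ : ℝ → ℝ) (hχ01 : ∀ u, χ u ∈ Set.Icc (0 : ℝ) 1)
    (hχ1 : ∀ u : ℝ, u ≤ η₁ / 2 → χ u = 1) (hχ0 : ∀ u : ℝ, η₁ ≤ u → χ u = 0)
    (φ : EuclideanSpace ℂ (Fin n) → ℂ)
    (hφ : ∀ z, φ z = (χ ‖z - ζ‖ : ℂ) * P z + ((1 : ℂ) - (χ ‖z - ζ‖ : ℂ)) * (‖z - ζ‖ ^ 2 : ℂ)) :
    ∀ z : EuclideanSpace ℂ (Fin n), η₁ / 2 ≤ ‖z - ζ‖ →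
      (η₁ ≤ ‖z - ζ‖ ∨ r z < C₂ * η₁ ^ 2 / 8) →
      C₂ * η₁ ^ 2 / 8 ≤ 2 * (φ z).re := by
  intro z hz hor
  have hre : (φ z).re = χ ‖z - ζ‖ * (P z).re + (1 - χ ‖z - ζ‖) * ‖z - ζ‖ ^ 2 := by
    rw [hφ z]; simp [← Complex.ofReal_pow]
  rw [hre]
  rcases le_or_gt η₁ ‖z - ζ‖ with h | h
  · rw [hχ0 _ h]
    have : η₁ ^ 2 ≤ ‖z - ζ‖ ^ 2 := pow_le_pow_left₀ hη₁0.le h 2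
    nlinarith
  · have hrz : r z < C₂ * η₁ ^ 2 / 8 := by
      rcases hor with h' | h'
      · linarith
      · exact h'
    have hlt : ‖z - ζ‖ < ε₂ := lt_trans h hη₁
    have h1 := hr z hlt
    have hsq : (η₁ / 2) ^ 2 ≤ ‖z - ζ‖ ^ 2 := pow_le_pow_left₀ (by positivity) hz 2
    -- 2 Re P z ≥ C₂‖z-ζ‖² - C₂η₁²/8 ≥ C₂η₁²/4 - C₂η₁²/8 = C₂η₁²/8 /2 form
    have hP : C₂ * η₁ ^ 2 / 8 ≤ 2 * (P z).re := by nlinarith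
    have hN : C₂ * η₁ ^ 2 / 8 ≤ 2 * ‖z - ζ‖ ^ 2 := by nlinarith
    obtain ⟨hχa, hχb⟩ := hχ01 ‖z - ζ‖
    nlinarith [mul_le_mul_of_nonneg_left hP hχa,
      mul_le_mul_of_nonneg_left hN (by linarith : (0:ℝ) ≤ 1 - χ ‖z - ζ‖)]
end

section
/- Let U ⊆ ℂⁿ be open, K ⊂ U compact, and r : U → ℝ of class C² with continuous second-order derivatives. Then for every α > 0 there exists δ > 0 such that for every C² function s : U → ℝ with ‖r − s‖_{C²(U)} < δ and all points ζ, ξ, z, w ∈ K with ‖ξ − ζ‖ < δ and ‖w − z‖ < δ, one has |P_r(z;ζ) − P_s(w;ξ)| < α, where P_r(·;ζ) and P_s(·;ξ) denote the Levi polynomials of r at ζ and of s at ξ respectively. -/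
open Complex Metric Set

noncomputable section

/-!
The coefficients of the Levi polynomial are first and second derivatives of `r` at `ζ`, so
`(ζ, z) ↦ P_r(z;ζ)` is continuous on `U × ℂⁿ` and hence uniformly continuous on `K × K`.
Moreover `P_r − P_s = P_{r−s}`, and `P_{r−s}(w;ξ)` is bounded by the first and second
derivatives of `r − s` at `ξ` times powers of `‖w − ξ‖ ≤ diam K`.
-/

section FDeriv

variable {𝕜 E F : Type*} [NontriviallyNormedField 𝕜] [NormedAddCommGroup E] [NormedSpace 𝕜 E]
  [NormedAddCommGroup F] [NormedSpace 𝕜 F]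

lemma fderiv_fderiv_fun_sub {f g : E → F} {x : E} (hf : ContDiffAt 𝕜 2 f x)
    (hg : ContDiffAt 𝕜 2 g x) :
    fderiv 𝕜 (fderiv 𝕜 fun y => f y - g y) x =
      fderiv 𝕜 (fderiv 𝕜 f) x - fderiv 𝕜 (fderiv 𝕜 g) x := by
  have hsub : fderiv 𝕜 (fun y => f y - g y) =ᶠ[nhds x] fun y => fderiv 𝕜 f y - fderiv 𝕜 g y := by
    filter_upwards [hf.eventually (by simp), hg.eventually (by simp)] with y hfy hgy
    exact fderiv_fun_sub (hfy.differentiableAt two_ne_zero) (hgy.differentiableAt two_ne_zero)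
  rw [hsub.fderiv_eq, fderiv_fun_sub]
  · exact (hf.fderiv_right (m := 1) le_rfl).differentiableAt one_ne_zero
  · exact (hg.fderiv_right (m := 1) le_rfl).differentiableAt one_ne_zero

end FDeriv

lemma norm_sub_sub_I_mul_add_le (a b c d : ℂ) : ‖a - b - I * (c + d)‖ ≤ ‖a‖ + ‖b‖ + ‖c‖ + ‖d‖ := by
  have h₁ := norm_sub_le a b
  have h₂ := norm_add_le c d
  have h₃ := norm_sub_le (a - b) (I * (c + d))
  rw [norm_mul, norm_I, one_mul] at h₃
  linarith

section Levi

variable {n : ℕ}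

lemma norm_stdBasis (j : Fin n) : ‖stdBasis n j‖ = 1 := by
  simp [stdBasis]

lemma norm_I_smul_stdBasis (j : Fin n) : ‖I • stdBasis n j‖ = 1 := by
  rw [norm_smul, norm_I, norm_stdBasis, one_mul]

lemma norm_wirtingerZ_le (f : EuclideanSpace ℂ (Fin n) → ℝ) (ξ : EuclideanSpace ℂ (Fin n))
    (j : Fin n) : ‖wirtingerZ f ξ j‖ ≤ ‖fderiv ℝ f ξ‖ := by
  rw [wirtingerZ, norm_mul]
  generalize fderiv ℝ f ξ = T
  have h₁ : |T (stdBasis n j)| ≤ ‖T‖ := T.unit_le_opNorm _ (norm_stdBasis j).le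
  have h₂ : |T (I • stdBasis n j)| ≤ ‖T‖ := T.unit_le_opNorm _ (norm_I_smul_stdBasis j).le
  have h : ‖(T (stdBasis n j) : ℂ) - I * T (I • stdBasis n j)‖
      ≤ |T (stdBasis n j)| + |T (I • stdBasis n j)| :=
    (norm_sub_le _ _).trans (by simp)
  norm_num
  linarith

lemma norm_wirtingerZZ_le (f : EuclideanSpace ℂ (Fin n) → ℝ) (ξ : EuclideanSpace ℂ (Fin n))
    (i j : Fin n) : ‖wirtingerZZ f ξ i j‖ ≤ ‖fderiv ℝ (fderiv ℝ f) ξ‖ := by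
  rw [wirtingerZZ, norm_mul]
  generalize fderiv ℝ (fderiv ℝ f) ξ = T
  have hT : ∀ u v : EuclideanSpace ℂ (Fin n), ‖u‖ = 1 → ‖v‖ = 1 → ‖(T u v : ℂ)‖ ≤ ‖T‖ := by
    intro u v hu hv
    simpa [hu, hv] using T.le_opNorm₂ u v
  have hsum := norm_sub_sub_I_mul_add_le (T (stdBasis n i) (stdBasis n j))
    (T (I • stdBasis n i) (I • stdBasis n j)) (T (stdBasis n i) (I • stdBasis n j))
    (T (I • stdBasis n i) (stdBasis n j))
  have h₁ := hT _ _ (norm_stdBasis i) (norm_stdBasis j)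
  have h₂ := hT _ _ (norm_I_smul_stdBasis i) (norm_I_smul_stdBasis j)
  have h₃ := hT _ _ (norm_stdBasis i) (norm_I_smul_stdBasis j)
  have h₄ := hT _ _ (norm_I_smul_stdBasis i) (norm_stdBasis j)
  norm_num
  linarith

lemma norm_leviPolynomial_le (f : EuclideanSpace ℂ (Fin n) → ℝ) (ξ w : EuclideanSpace ℂ (Fin n)) :
    ‖leviPolynomial f ξ w‖ ≤
      n * ‖fderiv ℝ f ξ‖ * ‖w - ξ‖ + n ^ 2 / 2 * ‖fderiv ℝ (fderiv ℝ f) ξ‖ * ‖w - ξ‖ ^ 2 := by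
  have hw : ∀ i, ‖w i - ξ i‖ ≤ ‖w - ξ‖ := fun i => PiLp.norm_apply_le (w - ξ) i
  have hlin : ‖∑ j, wirtingerZ f ξ j * (w j - ξ j)‖ ≤ n * ‖fderiv ℝ f ξ‖ * ‖w - ξ‖ :=
    calc ‖∑ j, wirtingerZ f ξ j * (w j - ξ j)‖
        ≤ ∑ _j : Fin n, ‖fderiv ℝ f ξ‖ * ‖w - ξ‖ := norm_sum_le_of_le _ fun j _ => by
          rw [norm_mul]
          exact mul_le_mul (norm_wirtingerZ_le f ξ j) (hw j) (norm_nonneg _) (norm_nonneg _)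
      _ = n * ‖fderiv ℝ f ξ‖ * ‖w - ξ‖ := by simp [mul_assoc]
  have hquad : ‖∑ i, ∑ j, wirtingerZZ f ξ i j * (w i - ξ i) * (w j - ξ j)‖
      ≤ n ^ 2 * ‖fderiv ℝ (fderiv ℝ f) ξ‖ * ‖w - ξ‖ ^ 2 :=
    calc ‖∑ i, ∑ j, wirtingerZZ f ξ i j * (w i - ξ i) * (w j - ξ j)‖
        ≤ ∑ _i : Fin n, ∑ _j : Fin n, ‖fderiv ℝ (fderiv ℝ f) ξ‖ * ‖w - ξ‖ * ‖w - ξ‖ :=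
          norm_sum_le_of_le _ fun i _ => norm_sum_le_of_le _ fun j _ => by
            rw [norm_mul, norm_mul]
            gcongr
            exacts [norm_wirtingerZZ_le f ξ i j, hw i, hw j]
      _ = n ^ 2 * ‖fderiv ℝ (fderiv ℝ f) ξ‖ * ‖w - ξ‖ ^ 2 := by simp; ring
  have hP := norm_sub_le (-∑ j, wirtingerZ f ξ j * (w j - ξ j))
    ((1 / 2 : ℂ) * ∑ i, ∑ j, wirtingerZZ f ξ i j * (w i - ξ i) * (w j - ξ j))
  rw [norm_neg, norm_mul] at hP
  rw [leviPolynomial]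
  norm_num at hP ⊢
  linarith

lemma leviPolynomial_sub {r s : EuclideanSpace ℂ (Fin n) → ℝ} {ξ : EuclideanSpace ℂ (Fin n)}
    (hr : ContDiffAt ℝ 2 r ξ) (hs : ContDiffAt ℝ 2 s ξ) (w : EuclideanSpace ℂ (Fin n)) :
    leviPolynomial (fun z => r z - s z) ξ w = leviPolynomial r ξ w - leviPolynomial s ξ w := by
  have h₁ : fderiv ℝ (fun z => r z - s z) ξ = fderiv ℝ r ξ - fderiv ℝ s ξ :=
    fderiv_fun_sub (hr.differentiableAt two_ne_zero) (hs.differentiableAt two_ne_zero)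
  have h₂ := fderiv_fderiv_fun_sub hr hs
  have hZ : ∀ j, wirtingerZ (fun z => r z - s z) ξ j = wirtingerZ r ξ j - wirtingerZ s ξ j := by
    intro j
    simp only [wirtingerZ, h₁, sub_apply, ofReal_sub]
    ring
  have hZZ : ∀ i j, wirtingerZZ (fun z => r z - s z) ξ i j
      = wirtingerZZ r ξ i j - wirtingerZZ s ξ i j := by
    intro i j
    simp only [wirtingerZZ, h₂, sub_apply, ofReal_sub]
    ring
  simp only [leviPolynomial, hZ, hZZ, sub_mul, Finset.sum_sub_distrib]
  ring

lemma norm_leviPolynomial_sub_le {U : Set (EuclideanSpace ℂ (Fin n))} (hU : IsOpen U)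
    {r s : EuclideanSpace ℂ (Fin n) → ℝ} (hr : ContDiffOn ℝ 2 r U) (hs : ContDiffOn ℝ 2 s U)
    {ε : ℝ} (hrs : C2NormLtOn (fun z => r z - s z) U ε) {ξ : EuclideanSpace ℂ (Fin n)}
    (hξ : ξ ∈ U) (w : EuclideanSpace ℂ (Fin n)) :
    ‖leviPolynomial r ξ w - leviPolynomial s ξ w‖ ≤
      ε * (n * ‖w - ξ‖ + n ^ 2 / 2 * ‖w - ξ‖ ^ 2) := by
  rw [← leviPolynomial_sub (hr.contDiffAt (hU.mem_nhds hξ)) (hs.contDiffAt (hU.mem_nhds hξ))]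
  obtain ⟨-, h₁, h₂⟩ := hrs ξ hξ
  calc _ ≤ n * ‖fderiv ℝ (fun z => r z - s z) ξ‖ * ‖w - ξ‖
          + n ^ 2 / 2 * ‖fderiv ℝ (fderiv ℝ fun z => r z - s z) ξ‖ * ‖w - ξ‖ ^ 2 :=
        norm_leviPolynomial_le _ ξ w
    _ ≤ n * ε * ‖w - ξ‖ + n ^ 2 / 2 * ε * ‖w - ξ‖ ^ 2 := by gcongr
    _ = ε * (n * ‖w - ξ‖ + n ^ 2 / 2 * ‖w - ξ‖ ^ 2) := by ring

lemma continuousOn_wirtingerZ {U : Set (EuclideanSpace ℂ (Fin n))}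
    {r : EuclideanSpace ℂ (Fin n) → ℝ} (h : ContinuousOn (fderiv ℝ r) U) (j : Fin n) :
    ContinuousOn (fun ζ => wirtingerZ r ζ j) U := by
  unfold wirtingerZ
  fun_prop

lemma continuousOn_wirtingerZZ {U : Set (EuclideanSpace ℂ (Fin n))}
    {r : EuclideanSpace ℂ (Fin n) → ℝ} (h : ContinuousOn (fderiv ℝ (fderiv ℝ r)) U) (i j : Fin n) :
    ContinuousOn (fun ζ => wirtingerZZ r ζ i j) U := by
  unfold wirtingerZZ
  fun_prop

lemma continuousOn_leviPolynomial {U : Set (EuclideanSpace ℂ (Fin n))} (hU : IsOpen U)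
    {r : EuclideanSpace ℂ (Fin n) → ℝ} (hr : ContDiffOn ℝ 2 r U) :
    ContinuousOn (fun p : EuclideanSpace ℂ (Fin n) × EuclideanSpace ℂ (Fin n) =>
      leviPolynomial r p.1 p.2) (U ×ˢ univ) := by
  have h₁ := continuousOn_wirtingerZ (hr.continuousOn_fderiv_of_isOpen hU (by norm_num))
  have h₂ := continuousOn_wirtingerZZ
    ((hr.fderiv_of_isOpen hU (m := 1) (by norm_num)).continuousOn_fderiv_of_isOpen hU le_rfl)
  have hfst : MapsTo Prod.fst (U ×ˢ (univ : Set (EuclideanSpace ℂ (Fin n)))) U := fun p hp => hp.1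
  have hZ := fun j => (h₁ j).comp continuousOn_fst hfst
  have hZZ := fun i j => (h₂ i j).comp continuousOn_fst hfst
  unfold leviPolynomial
  fun_prop

end Levi

/-- Let `U ⊆ ℂⁿ` be open, `K ⊂ U` compact, and `r : U → ℝ` of class `C²`
(with continuous second-order derivatives). Then for every `α > 0` there exists `δ > 0`
such that for every `C²` function `s : U → ℝ` with `‖r − s‖_{C²(U)} < δ` and all points
`ζ, ξ, z, w ∈ K` with `‖ξ − ζ‖ < δ` and `‖w − z‖ < δ`, one has
`|P_r(z;ζ) − P_s(w;ξ)| < α`. -/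
theorem statement13 {n : ℕ} (U : Set (EuclideanSpace ℂ (Fin n))) (hU : IsOpen U)
    (K : Set (EuclideanSpace ℂ (Fin n))) (hK : IsCompact K) (hKU : K ⊆ U)
    (r : EuclideanSpace ℂ (Fin n) → ℝ) (hr : ContDiffOn ℝ 2 r U) :
    ∀ α : ℝ, 0 < α → ∃ δ : ℝ, 0 < δ ∧
      ∀ s : EuclideanSpace ℂ (Fin n) → ℝ, ContDiffOn ℝ 2 s U →
        C2NormLtOn (fun z => r z - s z) U δ →
        ∀ ζ ∈ K, ∀ ξ ∈ K, ∀ z ∈ K, ∀ w ∈ K, ‖ξ - ζ‖ < δ → ‖w - z‖ < δ →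
          ‖leviPolynomial r ζ z - leviPolynomial s ξ w‖ < α := by
  intro α hα
  obtain ⟨δ₁, hδ₁, hPr⟩ := Metric.uniformContinuousOn_iff.mp
    ((hK.prod hK).uniformContinuousOn_of_continuous
      ((continuousOn_leviPolynomial hU hr).mono (prod_mono hKU (subset_univ K))))
    (α / 2) (half_pos hα)
  set M := diam K
  set C : ℝ := n * M + n ^ 2 / 2 * M ^ 2
  have hC : 0 ≤ C := by positivity
  set δ₂ := α / (2 * (C + 1))
  have hδ₂ : 0 < δ₂ := by positivity
  refine ⟨min δ₁ δ₂, lt_min hδ₁ hδ₂, fun s hs hrs ζ hζ ξ hξ z hz w hw hξζ hwz => ?_⟩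
  have hr_near : ‖leviPolynomial r ζ z - leviPolynomial r ξ w‖ < α / 2 := by
    rw [← dist_eq_norm]
    refine hPr (ζ, z) ⟨hζ, hz⟩ (ξ, w) ⟨hξ, hw⟩ ?_
    rw [Prod.dist_eq, dist_comm ζ, dist_comm z, dist_eq_norm, dist_eq_norm]
    exact max_lt (hξζ.trans_le (min_le_left _ _)) (hwz.trans_le (min_le_left _ _))
  have hrs_near : ‖leviPolynomial r ξ w - leviPolynomial s ξ w‖ < α / 2 := by
    have hwξ : ‖w - ξ‖ ≤ M := dist_eq_norm w ξ ▸ dist_le_diam_of_mem hK.isBounded hw hξ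
    calc _ ≤ min δ₁ δ₂ * (n * ‖w - ξ‖ + n ^ 2 / 2 * ‖w - ξ‖ ^ 2) :=
          norm_leviPolynomial_sub_le hU hr hs hrs (hKU hξ) w
      _ ≤ δ₂ * C := by simp only [C]; gcongr; exact min_le_right _ _
      _ < δ₂ * (C + 1) := by linarith
      _ = α / 2 := by simp only [δ₂]; field_simp
  calc _ ≤ _ := norm_sub_le_norm_sub_add_norm_sub _ (leviPolynomial r ξ w) _
    _ < α := by linarith

end
end
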